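/- arXiv:quant-ph/0302027 — 2 statements merged into one kernel-verified Lean document; each statement's English description precedes it below -/
import Mathlib

section
/- Let G=(V,E) be a finite cubic simple graph (every vertex has degree 3) and v a natural number. Then G contains an independent set of cardinality at least v if and only if there exists a spin configuration S : V → {−1,1} such that E(S) ≤ |V|/2 − 4v (as rational numbers), where E(S) = ∑_{k∈V} S_k + ∑_{{k,l}∈E} S_k S_l. -/
/-!
Identify a spin configuration `S : V → {±1}` with the set `B` of vertices where `S = 1`, and
write `e(B)` for the number of edges with both ends in `B`. Expanding `S = 2·1_B - 1` turns the
edge sum into `|E| - 2 ∑_{k ∈ B} deg k + 4 e(B)`, so for a cubic graph (`2|E| = 3|V|`)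
`E(S) = |V|/2 - 4|B| + 4 e(B)`. An independent set `B` has `e(B) = 0`; conversely, removing one
endpoint of each edge inside any `B` leaves an independent set of size at least `|B| - e(B)`.
-/

open Finset

/-- The edge term `f k * f l` as a function on unordered pairs. -/
def edgeTerm {V : Type*} (f : V → ℚ) : Sym2 V → ℚ :=
  Sym2.lift ⟨fun k l => f k * f l, fun k l => by ring⟩

/-- `E(S) = ∑_{k∈V} S_k + ∑_{{k,l}∈E} S_k S_l`. -/
def En {V : Type*} [Fintype V] [DecidableEq V] (G : SimpleGraph V)
    [DecidableRel G.Adj] (S : V → ℚ) : ℚ :=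
  (∑ k, S k) + ∑ e ∈ G.edgeFinset, edgeTerm S e

def pairSum {V M : Type*} [AddCommMonoid M] (f : V → M) : Sym2 V → M :=
  Sym2.lift ⟨fun k l => f k + f l, fun _ _ => add_comm _ _⟩

def spinOf {V : Type*} [DecidableEq V] (B : Finset V) (k : V) : ℚ := if k ∈ B then 1 else -1

section Spin

variable {V : Type*} [DecidableEq V]

theorem spinOf_eq_neg_one_or_one (B : Finset V) (k : V) :
    spinOf B k = -1 ∨ spinOf B k = 1 := by
  unfold spinOf
  split_ifs <;> simp

theorem eq_spinOf_of_forall_eq_neg_one_or_one [Fintype V] {S : V → ℚ}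
    (hS : ∀ k, S k = -1 ∨ S k = 1) : S = spinOf {k | S k = 1} := by
  funext k
  rcases hS k with h | h <;> simp [spinOf, h]

theorem edgeTerm_spinOf (B : Finset V) (e : Sym2 V) :
    edgeTerm (spinOf B) e =
      1 - 2 * pairSum (fun k => if k ∈ B then (1 : ℚ) else 0) e +
        4 * if e ∈ B.sym2 then 1 else 0 := by
  induction e with
  | _ k l =>
    simp only [edgeTerm, pairSum, spinOf, Sym2.lift_mk, mk_mem_sym2_iff]
    split_ifs <;> simp_all <;> norm_num

end Spin

namespace SimpleGraph

variable {V : Type*} [Fintype V] (G : SimpleGraph V) [DecidableRel G.Adj]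

theorem IsRegularOfDegree.two_mul_card_edgeFinset [DecidableEq V] {d : ℕ}
    (h : G.IsRegularOfDegree d) : 2 * #G.edgeFinset = d * Fintype.card V := by
  rw [← G.sum_degrees_eq_twice_card_edges, sum_congr rfl fun k _ => h.degree_eq k, sum_const,
    card_univ, smul_eq_mul, mul_comm]

variable [DecidableEq V]

theorem sum_dart_fst {M : Type*} [AddCommMonoid M] (f : V → M) :
    ∑ d : G.Dart, f d.fst = ∑ k, G.degree k • f k := by
  rw [← sum_fiberwise univ (fun d : G.Dart => d.fst)]
  refine sum_congr rfl fun k _ => ?_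
  rw [sum_congr rfl (g := fun _ => f k) (by simp +contextual), sum_const,
    dart_fst_fiber_card_eq_degree]

theorem sum_edgeFinset_pairSum {M : Type*} [AddCommMonoid M] (f : V → M) :
    ∑ e ∈ G.edgeFinset, pairSum f e = ∑ k, G.degree k • f k := by
  rw [← sum_dart_fst, ← sum_fiberwise_of_maps_to (g := Dart.edge) (t := G.edgeFinset) (by simp)]
  refine sum_congr rfl fun e he => ?_
  induction e with
  | _ k l =>
    let d : G.Dart := ⟨(k, l), mem_edgeFinset.1 he⟩
    rw [← show d.edge = s(k, l) from rfl, d.edge_fiber, sum_pair d.symm_ne.symm]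
    rfl

theorem En_spinOf (B : Finset V) :
    En G (spinOf B) = 2 * #B - Fintype.card V + #G.edgeFinset
      - 2 * ∑ k ∈ B, (G.degree k : ℚ) + 4 * #(G.edgeFinset ∩ B.sym2) := by
  have hvert : ∑ k, spinOf B k = 2 * #B - Fintype.card V := by
    have hcard := card_filter_add_card_filter_not (s := univ) (· ∈ B)
    rw [filter_mem_eq_inter, univ_inter, card_univ] at hcard
    simp only [spinOf, sum_ite, sum_const, filter_mem_eq_inter, univ_inter, nsmul_eq_mul, mul_one,
      mul_neg]
    rw [← hcard]
    push_cast
    ring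
  have hdeg := G.sum_edgeFinset_pairSum (fun k => if k ∈ B then (1 : ℚ) else 0)
  simp only [nsmul_eq_mul, mul_ite, mul_one, mul_zero, sum_ite_mem, univ_inter] at hdeg
  rw [En, hvert, sum_congr rfl fun e _ => edgeTerm_spinOf B e, sum_add_distrib, sum_sub_distrib,
    ← mul_sum, ← mul_sum, hdeg, sum_boole, filter_mem_eq_inter]
  simp only [sum_const, nsmul_eq_mul, mul_one]
  ring

theorem En_spinOf_of_isRegularOfDegree_three (h : G.IsRegularOfDegree 3) (B : Finset V) :
    En G (spinOf B) = Fintype.card V / 2 - 4 * #B + 4 * #(G.edgeFinset ∩ B.sym2) := by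
  have hedges : (2 * #G.edgeFinset : ℚ) = 3 * Fintype.card V := by
    exact_mod_cast h.two_mul_card_edgeFinset
  rw [En_spinOf, sum_congr rfl fun k _ => congrArg Nat.cast (h.degree_eq k)]
  simp only [sum_const, nsmul_eq_mul]
  linarith

omit [Fintype V] [DecidableRel G.Adj] in
theorem mk_mem_edgeFinset_inter_sym2 [Fintype G.edgeSet] {B : Finset V} {k l : V} :
    s(k, l) ∈ G.edgeFinset ∩ B.sym2 ↔ G.Adj k l ∧ k ∈ B ∧ l ∈ B := by
  rw [mem_inter, mem_edgeFinset, mem_edgeSet, mk_mem_sym2_iff]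

omit [Fintype V] [DecidableRel G.Adj] in
theorem edgeFinset_inter_sym2_eq_empty [Fintype G.edgeSet] {B : Finset V}
    (hB : ∀ k ∈ B, ∀ l ∈ B, ¬ G.Adj k l) : G.edgeFinset ∩ B.sym2 = ∅ :=
  eq_empty_of_forall_notMem fun e he => by
    induction e with
    | _ k l =>
      obtain ⟨hkl, hk, hl⟩ := G.mk_mem_edgeFinset_inter_sym2.1 he
      exact hB k hk l hl hkl

theorem exists_indep_card_le_add_card_edgeFinset_inter_sym2 (B : Finset V) :
    ∃ I : Finset V, (∀ k ∈ I, ∀ l ∈ I, ¬ G.Adj k l) ∧ #B ≤ #I + #(G.edgeFinset ∩ B.sym2) := by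
  induction B using Finset.strongInduction with
  | H B ih =>
  by_cases hB : ∀ k ∈ B, ∀ l ∈ B, ¬ G.Adj k l
  · exact ⟨B, hB, le_self_add⟩
  push Not at hB
  obtain ⟨k, hk, l, hl, hkl⟩ := hB
  obtain ⟨I, hI, hcard⟩ := ih (B.erase k) (erase_ssubset hk)
  have hlost : #(G.edgeFinset ∩ (B.erase k).sym2) < #(G.edgeFinset ∩ B.sym2) := by
    refine card_lt_card <| (ssubset_iff_of_subset <|
      inter_subset_inter_left (sym2_mono (erase_subset k B))).2 ⟨s(k, l), ?_, ?_⟩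
    · exact G.mk_mem_edgeFinset_inter_sym2.2 ⟨hkl, hk, hl⟩
    · simp [G.mk_mem_edgeFinset_inter_sym2]
  have := card_erase_add_one hk
  exact ⟨I, hI, by omega⟩

end SimpleGraph

/-- For a cubic graph `G`, there is an independent set of cardinality at least
`v` iff there is a spin configuration `S : V → {−1,1}` with
`E(S) ≤ |V|/2 − 4v`. -/
theorem indepSet_iff_exists_spin_En_le {V : Type*} [Fintype V] [DecidableEq V]
    (G : SimpleGraph V) [DecidableRel G.Adj]
    (hcubic : ∀ k, G.degree k = 3) (v : ℕ) :
    (∃ V' : Finset V, (∀ k ∈ V', ∀ l ∈ V', ¬ G.Adj k l) ∧ v ≤ V'.card) ↔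
      (∃ S : V → ℚ, (∀ k, S k = -1 ∨ S k = 1) ∧
        En G S ≤ (Fintype.card V : ℚ) / 2 - 4 * v) := by
  constructor
  · rintro ⟨I, hI, hv⟩
    refine ⟨spinOf I, spinOf_eq_neg_one_or_one I, ?_⟩
    rw [G.En_spinOf_of_isRegularOfDegree_three hcubic, G.edgeFinset_inter_sym2_eq_empty hI,
      card_empty]
    have : (v : ℚ) ≤ #I := by exact_mod_cast hv
    linarith
  · rintro ⟨S, hS, hle⟩
    set B : Finset V := {k | S k = 1}
    rw [eq_spinOf_of_forall_eq_neg_one_or_one hS,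
      G.En_spinOf_of_isRegularOfDegree_three hcubic] at hle
    obtain ⟨I, hI, hcard⟩ := G.exists_indep_card_le_add_card_edgeFinset_inter_sym2 B
    refine ⟨I, hI, ?_⟩
    have : (v : ℚ) + #(G.edgeFinset ∩ B.sym2) ≤ #B := by linarith
    have : v + #(G.edgeFinset ∩ B.sym2) ≤ #B := by exact_mod_cast this
    omega
end

section
/- Let G=(V,E) be a finite nonempty cubic simple graph (every vertex has degree 3). Then the minimum of E(S) over all spin configurations S : V → {−1,1} equals |V|/2 − 4·α(G) (as rational numbers), where α(G) is the maximum cardinality of an independent set of G and E(S) = ∑_{k∈V} S_k + ∑_{{k,l}∈E} S_k S_l. -/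
open Finset

/-- The sum term `f k + f l` as a function on unordered pairs. -/
def sumTerm {V : Type*} (f : V → ℚ) : Sym2 V → ℚ :=
  Sym2.lift ⟨fun k l => f k + f l, fun k l => by ring⟩

section Aux

variable {V : Type*} [Fintype V] [DecidableEq V] (G : SimpleGraph V) [DecidableRel G.Adj]

lemma sum_darts_fst (h : V → ℚ) :
    ∑ d : G.Dart, h d.fst = ∑ v, (G.degree v : ℚ) * h v := by
  rw [← Finset.sum_fiberwise_of_maps_to (g := fun d : G.Dart => d.fst)
    (t := Finset.univ) (fun _ _ => Finset.mem_univ _) (fun d => h d.fst)]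
  refine Finset.sum_congr rfl fun v _ => ?_
  rw [Finset.sum_congr rfl (fun d hd => by
    simp only [Finset.mem_filter] at hd; rw [hd.2])]
  rw [Finset.sum_const, nsmul_eq_mul]
  congr 2
  exact G.dart_fst_fiber_card_eq_degree v

lemma sum_edge_sumTerm (h : V → ℚ) :
    ∑ e ∈ G.edgeFinset, sumTerm h e = ∑ v, (G.degree v : ℚ) * h v := by
  rw [← sum_darts_fst]
  rw [← Finset.sum_fiberwise_of_maps_to (g := fun d : G.Dart => d.edge)
    (t := G.edgeFinset) (fun d _ => by rw [SimpleGraph.mem_edgeFinset]; exact d.edge_mem)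
    (fun d => h d.fst)]
  refine Finset.sum_congr rfl fun e he => ?_
  rw [SimpleGraph.mem_edgeFinset] at he
  induction e with
  | _ a b =>
    let d : G.Dart := ⟨(a, b), he⟩
    have hfib : (Finset.univ.filter fun d' : G.Dart => d'.edge = s(a, b)) = {d, d.symm} := by
      have := d.edge_fiber
      exact this
    rw [hfib, Finset.sum_pair d.symm_ne.symm]
    rfl

lemma sum_edge_indicator (C : Finset V) :
    ∑ e ∈ G.edgeFinset, edgeTerm (fun k => if k ∈ C then (1 : ℚ) else 0) e
      = #(G.edgeFinset.filter fun e => ∀ v ∈ e, v ∈ C) := by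
  rw [Finset.card_filter]
  push_cast
  refine Finset.sum_congr rfl fun e _ => ?_
  induction e with
  | _ a b =>
    simp only [edgeTerm, Sym2.lift_mk, Sym2.mem_iff]
    by_cases ha : a ∈ C <;> by_cases hb : b ∈ C <;>
      simp [ha, hb]

/-- Any finite vertex set contains an independent subset of size at least
`|C|` minus the number of edges inside `C`. -/
lemma exists_indep_subset (C : Finset V) :
    ∃ D : Finset V, (∀ k ∈ D, ∀ l ∈ D, ¬ G.Adj k l) ∧
      C.card ≤ D.card + #(G.edgeFinset.filter fun e => ∀ v ∈ e, v ∈ C) := by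
  induction C using Finset.strongInduction with
  | _ C ih =>
    by_cases h : ∃ e ∈ G.edgeFinset, ∀ v ∈ e, v ∈ C
    · obtain ⟨e, he, hin⟩ := h
      revert he hin
      induction e with
      | _ a b =>
        intro he hin
        have hadj : G.Adj a b := by rwa [SimpleGraph.mem_edgeFinset, SimpleGraph.mem_edgeSet] at he
        have haC : a ∈ C := hin a (by simp)
        obtain ⟨D, hD, hcard⟩ := ih (C.erase a) (Finset.erase_ssubset haC)
        refine ⟨D, hD, ?_⟩
        have hsub : (G.edgeFinset.filter fun e => ∀ v ∈ e, v ∈ C.erase a)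
            ⊆ (G.edgeFinset.filter fun e => ∀ v ∈ e, v ∈ C).erase s(a, b) := by
          intro f hf
          simp only [Finset.mem_filter, Finset.mem_erase] at hf ⊢
          refine ⟨?_, hf.1, fun v hv => (hf.2 v hv).2⟩
          rintro rfl
          exact (hf.2 a (by simp)).1 rfl
        have h1 := Finset.card_le_card hsub
        have hmem : s(a, b) ∈ (G.edgeFinset.filter fun e => ∀ v ∈ e, v ∈ C) :=
          Finset.mem_filter.mpr ⟨he, hin⟩
        have h2 := Finset.card_erase_of_mem hmem
        have h3 : 1 ≤ #(G.edgeFinset.filter fun e => ∀ v ∈ e, v ∈ C) :=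
          Finset.card_pos.mpr ⟨_, hmem⟩
        have h4 := Finset.card_erase_add_one haC
        omega
    · refine ⟨C, fun k hk l hl hadj => ?_, Nat.le_add_right _ _⟩
      refine h ⟨s(k, l), by rwa [SimpleGraph.mem_edgeFinset, SimpleGraph.mem_edgeSet], ?_⟩
      intro v hv
      rcases Sym2.mem_iff.mp hv with rfl | rfl
      · exact hk
      · exact hl

lemma En_formula (hcubic : ∀ k, G.degree k = 3) (S : V → ℚ) (hS : ∀ k, S k = -1 ∨ S k = 1) :
    En G S = (Fintype.card V : ℚ) / 2
      - 4 * #(Finset.univ.filter fun k => S k = 1)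
      + 4 * #(G.edgeFinset.filter fun e => ∀ v ∈ e,
          v ∈ Finset.univ.filter fun k => S k = 1) := by
  set C : Finset V := Finset.univ.filter fun k => S k = 1 with hC
  set χ : V → ℚ := fun k => if k ∈ C then (1 : ℚ) else 0 with hχ
  have hSχ : ∀ k, S k = 2 * χ k - 1 := by
    intro k
    rcases hS k with h | h
    · have : k ∉ C := by simp [hC, h]; norm_num [h]
      simp [hχ, this, h]
    · have : k ∈ C := by simp [hC, h]
      simp [hχ, this, h]
      norm_num
  -- per-edge identity
  have hedge : ∀ e ∈ G.edgeFinset,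
      edgeTerm S e = 4 * edgeTerm χ e - sumTerm S e - 1 := by
    intro e _
    induction e with
    | _ a b =>
      simp only [edgeTerm, sumTerm, Sym2.lift_mk]
      rw [hSχ a, hSχ b]
      ring
  have hsumS : ∑ k, S k = 2 * #C - Fintype.card V := by
    rw [Finset.sum_congr rfl fun k _ => hSχ k]
    rw [Finset.sum_sub_distrib, ← Finset.mul_sum, Finset.sum_const, Finset.card_univ]
    have : ∑ k, χ k = #C := by
      simp only [hχ, Finset.sum_boole, hC, Finset.filter_univ_mem]
    rw [this]
    push_cast
    ring
  have hE : (#G.edgeFinset : ℚ) = 3 * Fintype.card V / 2 := by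
    have h1 := G.sum_degrees_eq_twice_card_edges
    rw [Finset.sum_congr rfl fun k _ => hcubic k, Finset.sum_const, Finset.card_univ,
      smul_eq_mul] at h1
    have : ((Fintype.card V * 3 : ℕ) : ℚ) = ((2 * #G.edgeFinset : ℕ) : ℚ) := by rw [h1]
    push_cast at this
    linarith
  have hdeg : ∑ e ∈ G.edgeFinset, sumTerm S e = 3 * ∑ k, S k := by
    rw [sum_edge_sumTerm]
    rw [Finset.sum_congr rfl fun k _ => by rw [hcubic k]]
    rw [← Finset.mul_sum]
    norm_num
  have hind := sum_edge_indicator G C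
  rw [En, Finset.sum_congr rfl hedge]
  rw [Finset.sum_sub_distrib, Finset.sum_sub_distrib, ← Finset.mul_sum, Finset.sum_const,
    nsmul_eq_mul, mul_one, hdeg, hind, hsumS, hE]
  ring

end Aux

/-- For a nonempty cubic graph `G`, the minimum of `E(S)` over all spin
configurations equals `|V|/2 − 4 α(G)`, where `α(G)` is the maximum
cardinality of an independent set of `G`. -/
theorem min_En_eq_of_cubic {V : Type*} [Fintype V] [DecidableEq V]
    (G : SimpleGraph V) [DecidableRel G.Adj] (hne : Nonempty V)
    (hcubic : ∀ k, G.degree k = 3) (α : ℕ)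
    (hα : IsGreatest {n : ℕ | ∃ V' : Finset V,
      (∀ k ∈ V', ∀ l ∈ V', ¬ G.Adj k l) ∧ V'.card = n} α) :
    IsLeast {z : ℚ | ∃ S : V → ℚ, (∀ k, S k = -1 ∨ S k = 1) ∧ En G S = z}
      ((Fintype.card V : ℚ) / 2 - 4 * α) := by
  constructor
  · -- membership: take S = 1 on a maximum independent set, -1 elsewhere
    obtain ⟨V', hind, hcard⟩ := hα.1
    refine ⟨fun k => if k ∈ V' then 1 else -1, fun k => by by_cases h : k ∈ V' <;> simp [h], ?_⟩
    have hS : ∀ k, (fun k => if k ∈ V' then (1 : ℚ) else -1) k = -1 ∨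
        (fun k => if k ∈ V' then (1 : ℚ) else -1) k = 1 := by
      intro k; by_cases h : k ∈ V' <;> simp [h]
    rw [En_formula G hcubic _ hS]
    have hCeq : (Finset.univ.filter fun k => (if k ∈ V' then (1 : ℚ) else -1) = 1) = V' := by
      ext k
      by_cases h : k ∈ V' <;> simp [h]
      norm_num
    rw [hCeq]
    have hempty : (G.edgeFinset.filter fun e => ∀ v ∈ e, v ∈ V') = ∅ := by
      rw [Finset.filter_eq_empty_iff]
      intro e he
      rw [SimpleGraph.mem_edgeFinset] at he
      revert he
      induction e with
      | _ a b =>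
        intro he hin
        rw [SimpleGraph.mem_edgeSet] at he
        exact hind a (hin a (by simp)) b (hin b (by simp)) he
    rw [hempty, hcard]
    simp
  · -- lower bound
    rintro z ⟨S, hS, rfl⟩
    rw [En_formula G hcubic S hS]
    set C : Finset V := Finset.univ.filter fun k => S k = 1
    obtain ⟨D, hD, hle⟩ := exists_indep_subset G C
    have hDα : D.card ≤ α := hα.2 ⟨D, hD, rfl⟩
    have : (#C : ℚ) ≤ α + #(G.edgeFinset.filter fun e => ∀ v ∈ e, v ∈ C) := by
      have : #C ≤ α + #(G.edgeFinset.filter fun e => ∀ v ∈ e, v ∈ C) := by omega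
      exact_mod_cast this
    linarith
end
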